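/- arXiv:2205.13574 — 2 statements merged into one kernel-verified Lean document; each statement's English description precedes it below -/
import Mathlib

section
/- Define softmax : ℝ^m → ℝ^m by softmax(z)_c = exp(z_c)/Σ_{j=1}^m exp(z_j). Let u_1, …, u_n : ℝ^k → ℝ^m be differentiable at θ ∈ ℝ^k (the per-sample logit maps), let y_1, …, y_n ∈ ℝ^m with Σ_c (y_i)_c = 1 for each i, set f_i(θ) = softmax(u_i(θ)), and define the empirical cross-entropy risk J(θ) = (1/n)·Σ_{i=1}^n ( −Σ_{c=1}^m (y_i)_c · log(f_i(θ)_c) ). Then J is differentiable at θ and ‖∇J(θ)‖ ≤ (1/n)·Σ_{i=1}^n ‖f_i(θ) − y_i‖·‖D u_i(θ)‖, where D u_i(θ) is the Jacobian of u_i at θ, ‖·‖ on the Jacobian is the operator norm, and the vector norms are Euclidean. -/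
/-!
Since `∑ c, y c = 1`, the cross entropy of `softmax z` against `y` is
`log (∑ j, exp z_j) - ⟪y, z⟫`, so its gradient in the logits is `softmax z - y`. By the chain rule
the derivative of the `i`-th loss at `θ` is `⟪f_i(θ) - y_i, Du_i(θ) ·⟫`, whose operator norm is at
most `‖f_i(θ) - y_i‖ ‖Du_i(θ)‖`; the gradient of `J` has the same norm as its derivative.
-/

open Real

/-- The softmax map `softmax(z)_c = exp(z_c) / Σ_j exp(z_j)`. -/
noncomputable def softmax {m : ℕ} (z : EuclideanSpace ℝ (Fin m)) :
    EuclideanSpace ℝ (Fin m) :=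
  WithLp.toLp 2 (fun c => Real.exp (z c) / ∑ j, Real.exp (z j))

theorem norm_gradient_eq_norm_fderiv {𝕜 F : Type*} [RCLike 𝕜] [NormedAddCommGroup F]
    [InnerProductSpace 𝕜 F] [CompleteSpace F] (f : F → 𝕜) (x : F) :
    ‖gradient f x‖ = ‖fderiv 𝕜 f x‖ :=
  (InnerProductSpace.toDual 𝕜 F).symm.norm_map _

theorem norm_innerSL_comp_le {E F : Type*} [SeminormedAddCommGroup E] [NormedSpace ℝ E]
    [NormedAddCommGroup F] [InnerProductSpace ℝ F] (v : F) (L : E →L[ℝ] F) :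
    ‖(innerSL ℝ v).comp L‖ ≤ ‖v‖ * ‖L‖ :=
  (ContinuousLinearMap.opNorm_comp_le _ _).trans_eq (by rw [innerSL_apply_norm])

noncomputable def crossEntropy {ι : Type*} [Fintype ι] (y p : EuclideanSpace ℝ ι) : ℝ :=
  -∑ c, y c * log (p c)

section Softmax

variable {m : ℕ}

theorem log_softmax_apply (z : EuclideanSpace ℝ (Fin m)) (c : Fin m) :
    log (softmax z c) = z c - log (∑ j, exp (z j)) := by
  have hsum : 0 < ∑ j, exp (z j) :=
    Finset.sum_pos (fun j _ => exp_pos _) ⟨c, Finset.mem_univ c⟩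
  rw [softmax, log_div (exp_pos _).ne' hsum.ne', log_exp]

theorem crossEntropy_softmax {y : EuclideanSpace ℝ (Fin m)} (hy : ∑ c, y c = 1)
    (z : EuclideanSpace ℝ (Fin m)) :
    crossEntropy y (softmax z) = log (∑ j, exp (z j)) - inner ℝ y z := by
  simp only [crossEntropy, log_softmax_apply, mul_sub, Finset.sum_sub_distrib, ← Finset.sum_mul,
    hy, PiLp.inner_apply, RCLike.inner_apply, conj_trivial]
  simp only [mul_comm, one_mul, neg_sub]

theorem hasFDerivAt_log_sum_exp [Nonempty (Fin m)] (z : EuclideanSpace ℝ (Fin m)) :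
    HasFDerivAt (fun w : EuclideanSpace ℝ (Fin m) => log (∑ j, exp (w j)))
      (innerSL ℝ (softmax z)) z := by
  have hsum : HasFDerivAt (fun w : EuclideanSpace ℝ (Fin m) => ∑ j, exp (w j))
      (∑ j, exp (z j) • EuclideanSpace.proj (𝕜 := ℝ) j) z :=
    HasFDerivAt.fun_sum fun j _ =>
      (hasDerivAt_exp (z j)).comp_hasFDerivAt (f := fun w : EuclideanSpace ℝ (Fin m) => w j) z
        (EuclideanSpace.proj (𝕜 := ℝ) j).hasFDerivAt
  refine (hsum.log (Finset.sum_pos (fun j _ => exp_pos _) Finset.univ_nonempty).ne').congr_fderiv ?_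
  ext v
  simp only [smul_apply, sum_apply, smul_eq_mul, PiLp.proj_apply, innerSL_apply_apply, softmax,
    PiLp.inner_apply, RCLike.inner_apply, conj_trivial, Finset.mul_sum]
  exact Finset.sum_congr rfl fun _ _ => by ring

theorem hasFDerivAt_crossEntropy_softmax {y : EuclideanSpace ℝ (Fin m)} (hy : ∑ c, y c = 1)
    (z : EuclideanSpace ℝ (Fin m)) :
    HasFDerivAt (fun w => crossEntropy y (softmax w)) (innerSL ℝ (softmax z - y)) z := by
  have : Nonempty (Fin m) :=
    Finset.univ_nonempty_iff.mp (Finset.nonempty_of_sum_ne_zero (hy ▸ one_ne_zero))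
  simp only [crossEntropy_softmax hy, map_sub]
  exact (hasFDerivAt_log_sum_exp z).sub (innerSL ℝ y).hasFDerivAt

end Softmax

/-- Proposition 2 (cross-entropy): for the empirical cross-entropy risk of a
softmax classifier with differentiable logit maps `uᵢ`, `J` is differentiable
at `θ` and `‖∇J(θ)‖ ≤ (1/n) Σᵢ ‖fᵢ(θ) − yᵢ‖ ‖Duᵢ(θ)‖`, where
`fᵢ = softmax ∘ uᵢ` and `Duᵢ(θ)` is the Jacobian of `uᵢ` at `θ`. -/
theorem grad_norm_crossEntropy_bound {n m k : ℕ}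
    (u : Fin n → EuclideanSpace ℝ (Fin k) → EuclideanSpace ℝ (Fin m))
    (y : Fin n → EuclideanSpace ℝ (Fin m))
    (θ : EuclideanSpace ℝ (Fin k))
    (hu : ∀ i, DifferentiableAt ℝ (u i) θ)
    (hy : ∀ i, ∑ c, y i c = 1)
    (f : Fin n → EuclideanSpace ℝ (Fin k) → EuclideanSpace ℝ (Fin m))
    (hf : ∀ i ω, f i ω = softmax (u i ω))
    (J : EuclideanSpace ℝ (Fin k) → ℝ)
    (hJ : ∀ ω, J ω = (1 / (n : ℝ)) * ∑ i, -∑ c, y i c * Real.log (f i ω c)) :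
    DifferentiableAt ℝ J θ ∧
      ‖gradient J θ‖ ≤
        (1 / (n : ℝ)) * ∑ i, ‖f i θ - y i‖ * ‖fderiv ℝ (u i) θ‖ := by
  have hJ' : J = fun ω => (1 / (n : ℝ)) * ∑ i, crossEntropy (y i) (softmax (u i ω)) := by
    funext ω; simp only [hJ, hf, crossEntropy]
  have hderiv : HasFDerivAt J
      ((1 / (n : ℝ)) • ∑ i, (innerSL ℝ (f i θ - y i)).comp (fderiv ℝ (u i) θ)) θ := by
    simp only [hJ', hf]
    exact (HasFDerivAt.fun_sum fun i _ =>
      (hasFDerivAt_crossEntropy_softmax (hy i) _).comp θ (hu i).hasFDerivAt).const_mul _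
  refine ⟨hderiv.differentiableAt, ?_⟩
  rw [norm_gradient_eq_norm_fderiv, hderiv.fderiv, norm_smul, Real.norm_of_nonneg (by positivity)]
  gcongr
  exact (norm_sum_le _ _).trans (Finset.sum_le_sum fun i _ => norm_innerSL_comp_le _ _)
end

section
/- Let σ : ℝ → ℝ be the sigmoid function σ(z) = 1/(1 + exp(−z)), let u : ℝ^k → ℝ be twice continuously differentiable, let y ∈ ℝ, set f(θ) = σ(u(θ)), and define ℓ : ℝ^k → ℝ by ℓ(θ) = −( y·log(f(θ)) + (1 − y)·log(1 − f(θ)) ). Then for every θ ∈ ℝ^k and every v ∈ ℝ^k, Hess ℓ(θ)(v, v) ≤ ( f(θ)·(1 − f(θ))·‖∇u(θ)‖² + |f(θ) − y|·‖Hess u(θ)‖ )·‖v‖², where Hess ℓ(θ) and Hess u(θ) are the second-derivative bilinear forms, ‖Hess u(θ)‖ is the operator norm of Hess u(θ), and the vector norms are Euclidean. -/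
/-!
Write `ℓ = G ∘ u` with `G z = BCE(y, σ z)`. Since `σ' = σ (1 - σ)`, the logarithms cancel against
`σ` and `1 - σ` and `G' = σ - y`, hence `G'' = σ (1 - σ)`. The second-order chain rule gives
`D²ℓ(v, v) = σ (1 - σ) (Du v)² + (σ - y) D²u(v, v)`, and the two terms are bounded by
Cauchy–Schwarz for the gradient and by the operator norm of `D²u`.
-/

noncomputable def sigmoid (z : ℝ) : ℝ := 1 / (1 + Real.exp (-z))

theorem sigmoid_eq_real_sigmoid : sigmoid = Real.sigmoid := by
  funext z
  rw [sigmoid, Real.sigmoid_def, one_div]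

noncomputable def binaryCrossEntropy (y p : ℝ) : ℝ :=
  -(y * Real.log p + (1 - y) * Real.log (1 - p))

theorem hasDerivAt_binaryCrossEntropy_sigmoid (y z : ℝ) :
    HasDerivAt (fun z => binaryCrossEntropy y (Real.sigmoid z)) (Real.sigmoid z - y) z := by
  have hσ := Real.hasDerivAt_sigmoid z
  have hpos := Real.sigmoid_pos z
  have hlt := Real.sigmoid_lt_one z
  have hlog := hσ.log hpos.ne'
  have hlog' := (hσ.const_sub 1).log (sub_pos.2 hlt).ne'
  refine ((hlog.const_mul y).add (hlog'.const_mul (1 - y))).neg.congr_deriv ?_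
  field_simp [hpos.ne', (sub_pos.2 hlt).ne']
  ring

section

variable {E : Type*} [NormedAddCommGroup E]

theorem iteratedFDeriv_two_comp_apply [NormedSpace ℝ E] {g g' : ℝ → ℝ} {g'' : ℝ} {u : E → ℝ}
    {x : E} (hg : ∀ z, HasDerivAt g (g' z) z) (hg' : HasDerivAt g' g'' (u x))
    (hu : Differentiable ℝ u) (hu' : DifferentiableAt ℝ (fderiv ℝ u) x) (v w : E) :
    iteratedFDeriv ℝ 2 (g ∘ u) x ![v, w] =
      g'' * (fderiv ℝ u x v * fderiv ℝ u x w) + g' (u x) * iteratedFDeriv ℝ 2 u x ![v, w] := by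
  have hD : fderiv ℝ (g ∘ u) = fun x => g' (u x) • fderiv ℝ u x :=
    funext fun x => ((hg (u x)).comp_hasFDerivAt x (hu x).hasFDerivAt).fderiv
  have hD2 : HasFDerivAt (fun x => g' (u x) • fderiv ℝ u x)
      (g' (u x) • fderiv ℝ (fderiv ℝ u) x + (g'' • fderiv ℝ u x).smulRight (fderiv ℝ u x)) x :=
    (hg'.comp_hasFDerivAt x (hu x).hasFDerivAt).smul hu'.hasFDerivAt
  rw [iteratedFDeriv_two_apply, iteratedFDeriv_two_apply, hD, hD2.fderiv]
  simp only [Matrix.cons_val_zero, Matrix.cons_val_one, Matrix.cons_val_fin_one,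
    add_apply, smul_apply,
    ContinuousLinearMap.smulRight_apply, smul_eq_mul]
  ring

theorem ContinuousMultilinearMap.abs_apply_pair_self_le [NormedSpace ℝ E]
    (B : ContinuousMultilinearMap ℝ (fun _ : Fin 2 => E) ℝ) (v : E) :
    |B ![v, v]| ≤ ‖B‖ * ‖v‖ ^ 2 :=
  (B.le_opNorm ![v, v]).trans_eq (by simp [Fin.prod_univ_two, sq])

theorem abs_fderiv_apply_le_norm_gradient_mul [InnerProductSpace ℝ E] [CompleteSpace E]
    (u : E → ℝ) (x v : E) : |fderiv ℝ u x v| ≤ ‖gradient u x‖ * ‖v‖ := by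
  rw [gradient, LinearIsometryEquiv.norm_map]
  exact (fderiv ℝ u x).le_opNorm v

end

/-- Per-sample form of Theorem 2: for a binary classifier `f = σ ∘ u` trained
with binary cross-entropy loss, the Hessian quadratic form of the loss is
bounded by `(f(1−f)‖∇u‖² + |f − y| ‖Hess u‖) ‖v‖²`. -/
theorem hessian_quadForm_binaryCrossEntropy_le {k : ℕ}
    (u : EuclideanSpace ℝ (Fin k) → ℝ) (hu : ContDiff ℝ 2 u) (y : ℝ)
    (f : EuclideanSpace ℝ (Fin k) → ℝ) (hf : ∀ ω, f ω = sigmoid (u ω))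
    (ℓ : EuclideanSpace ℝ (Fin k) → ℝ)
    (hℓ : ∀ ω, ℓ ω = -(y * Real.log (f ω) + (1 - y) * Real.log (1 - f ω))) :
    ∀ (θ v : EuclideanSpace ℝ (Fin k)),
      iteratedFDeriv ℝ 2 ℓ θ ![v, v] ≤
        (f θ * (1 - f θ) * ‖gradient u θ‖ ^ 2
          + |f θ - y| * ‖iteratedFDeriv ℝ 2 u θ‖) * ‖v‖ ^ 2 := by
  intro θ v
  have hf' : f = Real.sigmoid ∘ u := funext fun ω => by rw [hf, sigmoid_eq_real_sigmoid]; rfl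
  have hℓ' : ℓ = (fun z => binaryCrossEntropy y (Real.sigmoid z)) ∘ u :=
    funext fun ω => by rw [hℓ, hf']; rfl
  rw [hℓ', iteratedFDeriv_two_comp_apply (hasDerivAt_binaryCrossEntropy_sigmoid y)
    ((Real.hasDerivAt_sigmoid (u θ)).sub_const y) (hu.differentiable two_ne_zero)
    ((hu.fderiv_right (m := 1) le_rfl).differentiable one_ne_zero θ), hf', Function.comp_apply]
  set s := Real.sigmoid (u θ)
  have hs : 0 ≤ s * (1 - s) :=
    mul_nonneg (Real.sigmoid_pos _).le (sub_nonneg.2 (Real.sigmoid_le_one _))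
  have hgrad := abs_fderiv_apply_le_norm_gradient_mul u θ v
  have hhess := (iteratedFDeriv ℝ 2 u θ).abs_apply_pair_self_le v
  calc s * (1 - s) * (fderiv ℝ u θ v * fderiv ℝ u θ v) + (s - y) * iteratedFDeriv ℝ 2 u θ ![v, v]
      ≤ s * (1 - s) * ((‖gradient u θ‖ * ‖v‖) * (‖gradient u θ‖ * ‖v‖))
          + |s - y| * (‖iteratedFDeriv ℝ 2 u θ‖ * ‖v‖ ^ 2) := by
        refine add_le_add (mul_le_mul_of_nonneg_left ?_ hs) ?_
        · rw [← abs_mul_abs_self]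
          exact mul_self_le_mul_self (abs_nonneg _) hgrad
        · refine (le_abs_self _).trans ?_
          rw [abs_mul]
          exact mul_le_mul_of_nonneg_left hhess (abs_nonneg _)
    _ = _ := by ring
end
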